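/- arXiv:1906.04561 — 9 statements merged into one kernel-verified Lean document; each statement's English description precedes it below -/
import Mathlib

section
/- If (V, μ) is a Jordan algebra over a field F and α : V → V is an algebra homomorphism, then (V, μ̃, α) with μ̃(x,y) = α(μ(x,y)) is a multiplicative Hom-Jordan algebra. -/
namespace HomJordanPaper

variable {K : Type*} [Field K] {V : Type*} [AddCommGroup V] [Module K V]

/-- Jordan algebra: commutative product satisfying `(x²∘y)∘x = x²∘(y∘x)`. -/
def IsJordan (μ : V →ₗ[K] V →ₗ[K] V) : Prop :=
  (∀ x y, μ x y = μ y x) ∧ ∀ x y, μ (μ (μ x x) y) x = μ (μ x x) (μ y x)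

/-- Hom-Jordan algebra: commutative product with the Hom-Jordan identity. -/
def IsHomJordan (μ : V →ₗ[K] V →ₗ[K] V) (α : V →ₗ[K] V) : Prop :=
  (∀ x y, μ x y = μ y x) ∧
  ∀ x y, μ (α (α x)) (μ y (μ x x)) = μ (μ (α x) y) (α (μ x x))

def IsMultiplicative (μ : V →ₗ[K] V →ₗ[K] V) (α : V →ₗ[K] V) : Prop :=
  ∀ x y, α (μ x y) = μ (α x) (α y)

def IsHomIdeal (μ : V →ₗ[K] V →ₗ[K] V) (α : V →ₗ[K] V) (I : Submodule K V) : Prop :=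
  (∀ x ∈ I, α x ∈ I) ∧ ∀ x ∈ I, ∀ y : V, μ x y ∈ I

def productSpan (μ : V →ₗ[K] V →ₗ[K] V) : Submodule K V :=
  Submodule.span K {z | ∃ x y, z = μ x y}

def IsSimpleHJ (μ : V →ₗ[K] V →ₗ[K] V) (α : V →ₗ[K] V) : Prop :=
  α ≠ 0 ∧ (∀ I : Submodule K V, IsHomIdeal μ α I → I = ⊥ ∨ I = ⊤) ∧ productSpan μ = ⊤

/-- twisting a Jordan algebra by an algebra endomorphism gives a
multiplicative Hom-Jordan algebra. -/
theorem stmt0 {F : Type*} [Field F] {V : Type*} [AddCommGroup V] [Module F V]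
    (μ : V →ₗ[F] V →ₗ[F] V) (α : V →ₗ[F] V)
    (hJ : IsJordan μ) (hα : ∀ x y, α (μ x y) = μ (α x) (α y))
    (μt : V →ₗ[F] V →ₗ[F] V) (hμt : ∀ x y, μt x y = α (μ x y)) :
    IsHomJordan μt α ∧ IsMultiplicative μt α := by
  obtain ⟨hc, hj⟩ := hJ
  refine ⟨⟨fun x y => by rw [hμt, hμt, hc], fun x y => ?_⟩,
    fun x y => by simp only [hμt, hα]⟩
  simp only [hμt, hα]
  set X := α (α (α x)) with hX
  set b := α (α y) with hb
  calc μ X (μ b (μ X X)) = μ (μ (μ X X) b) X := by rw [hc X, hc b]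
    _ = μ (μ X X) (μ b X) := hj X b
    _ = μ (μ X b) (μ X X) := by rw [hc (μ X X), hc b]

end HomJordanPaper
end

section
/- If (V, μ, α) is a multiplicative Hom-Jordan algebra with α invertible, then (V, μ') with μ'(x,y) = α⁻¹(μ(x,y)) is a Jordan algebra, and μ(x,y) = α(μ'(x,y)) = μ'(α(x), α(y)) for all x, y; hence (V, μ, α) is a Jordan-type Hom-Jordan algebra with induced Jordan algebra (V, μ'). -/
namespace HomJordanPaper

variable {K : Type*} [Field K] {V : Type*} [AddCommGroup V] [Module K V]

/-- a multiplicative Hom-Jordan algebra with invertible `α` is of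
Jordan type, with induced Jordan product `μ' = α⁻¹ ∘ μ`. -/
theorem stmt1 {F : Type*} [Field F] {V : Type*} [AddCommGroup V] [Module F V]
    (μ : V →ₗ[F] V →ₗ[F] V) (α : V →ₗ[F] V)
    (hHJ : IsHomJordan μ α) (hmul : IsMultiplicative μ α)
    (hbij : Function.Bijective α)
    (μ' : V →ₗ[F] V →ₗ[F] V) (hμ' : ∀ x y, α (μ' x y) = μ x y) :
    IsJordan μ' ∧ (∀ x y, μ x y = α (μ' x y)) ∧ (∀ x y, μ x y = μ' (α x) (α y)) := by
  obtain ⟨hc, hid⟩ := hHJ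
  have hinj := hbij.injective
  have hm : ∀ x y, α (μ x y) = μ (α x) (α y) := hmul
  have h3 : ∀ x y, μ x y = μ' (α x) (α y) := by
    intro x y
    apply hinj
    rw [hμ', hm]
  refine ⟨⟨?_, ?_⟩, fun x y => (hμ' x y).symm, h3⟩
  · intro x y
    apply hinj
    rw [hμ', hμ', hc]
  · intro x y
    apply hinj; apply hinj; apply hinj
    simp only [hm, hμ']
    rw [hc, hc (μ x x) (α y), hid x (α y), hm, hc (α x) (α y), hc]

end HomJordanPaper
end

section
/- Let (V₁, μ̃₁, α) and (V₂, μ̃₂, β) be Jordan-type Hom-Jordan algebras with induced Jordan algebras (V₁, μ₁) and (V₂, μ₂), and suppose β is injective. Then a bijective linear map φ : V₁ → V₂ with φ∘α = β∘φ is an isomorphism of Hom-Jordan algebras (i.e., φ(μ̃₁(x,y)) = μ̃₂(φ(x),φ(y))) if and only if φ is an isomorphism of the induced Jordan algebras (i.e., φ(μ₁(x,y)) = μ₂(φ(x),φ(y))). -/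
namespace HomJordanPaper

variable {K : Type*} [Field K] {V : Type*} [AddCommGroup V] [Module K V]

/-- for Jordan-type Hom-Jordan algebras with `β` injective, a bijective
linear map intertwining the twist maps is a Hom-Jordan isomorphism iff it is an
isomorphism of the induced Jordan algebras. -/
theorem stmt2 {F : Type*} [Field F] {V₁ : Type*} [AddCommGroup V₁] [Module F V₁]
    {V₂ : Type*} [AddCommGroup V₂] [Module F V₂]
    (μt₁ μ₁ : V₁ →ₗ[F] V₁ →ₗ[F] V₁) (α : V₁ →ₗ[F] V₁)
    (μt₂ μ₂ : V₂ →ₗ[F] V₂ →ₗ[F] V₂) (β : V₂ →ₗ[F] V₂)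
    (hHJ₁ : IsHomJordan μt₁ α) (hJ₁ : IsJordan μ₁)
    (h₁ : ∀ x y, μt₁ x y = α (μ₁ x y)) (h₁' : ∀ x y, μt₁ x y = μ₁ (α x) (α y))
    (hHJ₂ : IsHomJordan μt₂ β) (hJ₂ : IsJordan μ₂)
    (h₂ : ∀ x y, μt₂ x y = β (μ₂ x y)) (h₂' : ∀ x y, μt₂ x y = μ₂ (β x) (β y))
    (hβ : Function.Injective β)
    (φ : V₁ →ₗ[F] V₂) (hφ : Function.Bijective φ)
    (hcomm : ∀ x, φ (α x) = β (φ x)) :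
    (∀ x y, φ (μt₁ x y) = μt₂ (φ x) (φ y)) ↔ (∀ x y, φ (μ₁ x y) = μ₂ (φ x) (φ y)) := by
  constructor
  · intro h x y
    apply hβ
    calc β (φ (μ₁ x y)) = φ (α (μ₁ x y)) := (hcomm _).symm
      _ = φ (μt₁ x y) := by rw [← h₁]
      _ = μt₂ (φ x) (φ y) := h x y
      _ = β (μ₂ (φ x) (φ y)) := h₂ _ _
  · intro h x y
    calc φ (μt₁ x y) = φ (α (μ₁ x y)) := by rw [← h₁]
      _ = β (φ (μ₁ x y)) := hcomm _
      _ = β (μ₂ (φ x) (φ y)) := by rw [h]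
      _ = μt₂ (φ x) (φ y) := (h₂ _ _).symm

end HomJordanPaper
end

section
/- If (V, μ, α) is a multiplicative Hom-Jordan algebra with α² = α, then on the quotient V/Ker(α), the induced map ᾱ is invertible; consequently (V/Ker(α), μ̄, ᾱ) is a Jordan-type Hom-Jordan algebra. -/
namespace HomJordanPaper

variable {K : Type*} [Field K] {V : Type*} [AddCommGroup V] [Module K V]

/-- if `α² = α`, then on `V ⧸ Ker α` the induced map is invertible, and the
quotient is a Jordan-type Hom-Jordan algebra. -/
theorem stmt5 {F : Type*} [Field F] {V : Type*} [AddCommGroup V] [Module F V]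
    (μ : V →ₗ[F] V →ₗ[F] V) (α : V →ₗ[F] V)
    (hHJ : IsHomJordan μ α) (hmul : IsMultiplicative μ α)
    (hidem : ∀ x, α (α x) = α x) :
    ∃ (μb : (V ⧸ LinearMap.ker α) →ₗ[F] (V ⧸ LinearMap.ker α) →ₗ[F] (V ⧸ LinearMap.ker α))
      (αb : (V ⧸ LinearMap.ker α) →ₗ[F] (V ⧸ LinearMap.ker α)),
      (∀ x y : V, μb (Submodule.Quotient.mk x) (Submodule.Quotient.mk y)
          = Submodule.Quotient.mk (μ x y)) ∧
      (∀ x : V, αb (Submodule.Quotient.mk x) = Submodule.Quotient.mk (α x)) ∧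
      IsHomJordan μb αb ∧ IsMultiplicative μb αb ∧
      Function.Bijective αb ∧
      ∃ μ' : (V ⧸ LinearMap.ker α) →ₗ[F] (V ⧸ LinearMap.ker α) →ₗ[F] (V ⧸ LinearMap.ker α),
        IsJordan μ' ∧ (∀ a b, μb a b = αb (μ' a b)) ∧ (∀ a b, μb a b = μ' (αb a) (αb b)) := by
  classical
  have hc := hHJ.1
  have hmul' : ∀ x y, α (μ x y) = μ (α x) (α y) := hmul
  -- the kernel absorbs products
  have hker : ∀ (x y : V), y ∈ LinearMap.ker α → μ x y ∈ LinearMap.ker α := by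
    intro x y hy
    rw [LinearMap.mem_ker] at hy ⊢
    rw [hmul, hy, map_zero]
  have hkerl : ∀ (x y : V), x ∈ LinearMap.ker α → μ x y ∈ LinearMap.ker α := by
    intro x y hx
    rw [hc]; exact hker y x hx
  have hle : ∀ x : V, LinearMap.ker α ≤
      LinearMap.ker (((LinearMap.ker α).mkQ).comp (μ x)) := by
    intro x y hy
    simp only [LinearMap.mem_ker, LinearMap.comp_apply, Submodule.mkQ_apply,
      Submodule.Quotient.mk_eq_zero]
    exact hker x y hy
  -- the bilinear map into the quotient, with second argument already quotiented
  let G : V →ₗ[F] (V ⧸ LinearMap.ker α) →ₗ[F] (V ⧸ LinearMap.ker α) :=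
    { toFun := fun x => Submodule.liftQ _ (((LinearMap.ker α).mkQ).comp (μ x)) (hle x)
      map_add' := by
        intro x₁ x₂
        apply LinearMap.ext; intro q
        obtain ⟨y, rfl⟩ := Submodule.Quotient.mk_surjective _ q
        simp [Submodule.liftQ_apply]
      map_smul' := by
        intro c x
        apply LinearMap.ext; intro q
        obtain ⟨y, rfl⟩ := Submodule.Quotient.mk_surjective _ q
        simp [Submodule.liftQ_apply] }
  have hGle : LinearMap.ker α ≤ LinearMap.ker G := by
    intro x hx
    rw [LinearMap.mem_ker]
    apply LinearMap.ext; intro q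
    obtain ⟨y, rfl⟩ := Submodule.Quotient.mk_surjective _ q
    show Submodule.liftQ _ _ _ (Submodule.Quotient.mk y) = 0
    rw [Submodule.liftQ_apply]
    simp only [LinearMap.comp_apply, Submodule.mkQ_apply, LinearMap.zero_apply,
      Submodule.Quotient.mk_eq_zero]
    exact hkerl x y hx
  let μb := Submodule.liftQ _ G hGle
  have hμb : ∀ x y : V, μb (Submodule.Quotient.mk x) (Submodule.Quotient.mk y)
      = Submodule.Quotient.mk (μ x y) := by
    intro x y
    show Submodule.liftQ _ G hGle (Submodule.Quotient.mk x) (Submodule.Quotient.mk y) = _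
    rw [Submodule.liftQ_apply]
    show Submodule.liftQ _ _ _ (Submodule.Quotient.mk y) = _
    rw [Submodule.liftQ_apply]
    rfl
  -- since α² = α, mk (α x) = mk x
  have hmk : ∀ x : V, (Submodule.Quotient.mk (α x) : V ⧸ LinearMap.ker α)
      = Submodule.Quotient.mk x := by
    intro x
    rw [Submodule.Quotient.eq]
    simp [LinearMap.mem_ker, map_sub, hidem]
  -- key identity for α-fixed points
  have hD' : ∀ u v : V, α u = u → μ u (μ v (μ u u)) = μ (μ u v) (μ u u) := by
    intro u v hu
    have h := hHJ.2 u v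
    rw [hmul, hu, hu] at h
    exact h
  have hD : ∀ x y : V, α (μ x (μ y (μ x x))) = α (μ (μ x y) (μ x x)) := by
    intro x y
    simp only [hmul']
    exact hD' (α x) (α y) (hidem x)
  have hJ' : ∀ u v : V, α u = u → μ (μ (μ u u) v) u = μ (μ u u) (μ v u) := by
    intro u v hu
    calc μ (μ (μ u u) v) u = μ u (μ (μ u u) v) := hc _ _
      _ = μ u (μ v (μ u u)) := by rw [hc (μ u u) v]
      _ = μ (μ u v) (μ u u) := hD' u v hu
      _ = μ (μ v u) (μ u u) := by rw [hc u v]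
      _ = μ (μ u u) (μ v u) := hc _ _
  have hJ : ∀ x y : V, α (μ (μ (μ x x) y) x) = α (μ (μ x x) (μ y x)) := by
    intro x y
    simp only [hmul']
    exact hJ' (α x) (α y) (hidem x)
  refine ⟨μb, LinearMap.id, hμb, ?_, ?_, ?_, ?_, μb, ?_, ?_, ?_⟩
  · intro x
    simp only [LinearMap.id_coe, id_eq]
    exact (hmk x).symm
  · constructor
    · intro a b
      obtain ⟨x, rfl⟩ := Submodule.Quotient.mk_surjective _ a
      obtain ⟨y, rfl⟩ := Submodule.Quotient.mk_surjective _ b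
      rw [hμb, hμb, hc]
    · intro a b
      obtain ⟨x, rfl⟩ := Submodule.Quotient.mk_surjective _ a
      obtain ⟨y, rfl⟩ := Submodule.Quotient.mk_surjective _ b
      simp only [LinearMap.id_coe, id_eq, hμb]
      rw [Submodule.Quotient.eq, LinearMap.mem_ker, map_sub, hD, sub_self]
  · intro a b; rfl
  · exact Function.bijective_id
  · constructor
    · intro a b
      obtain ⟨x, rfl⟩ := Submodule.Quotient.mk_surjective _ a
      obtain ⟨y, rfl⟩ := Submodule.Quotient.mk_surjective _ b
      rw [hμb, hμb, hc]
    · intro a b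
      obtain ⟨x, rfl⟩ := Submodule.Quotient.mk_surjective _ a
      obtain ⟨y, rfl⟩ := Submodule.Quotient.mk_surjective _ b
      simp only [hμb]
      rw [Submodule.Quotient.eq, LinearMap.mem_ker, map_sub, hJ, sub_self]
  · intro a b; rfl
  · intro a b; rfl

end HomJordanPaper
end

section
/- Let (V, μ, α) be a multiplicative Hom-Jordan algebra with α invertible, and let (V, μ') be its induced Jordan algebra (μ' = α⁻¹∘μ). Then the k-th derived spaces satisfy Ṽ^(k) = α^k(V^(k)) for all k ≥ 1, where Ṽ^(k) is the derived series of (V, μ, α) and V^(k) that of (V, μ'). Consequently (V, μ, α) is solvable if and only if (V, μ') is solvable. -/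
namespace HomJordanPaper

variable {K : Type*} [Field K] {V : Type*} [AddCommGroup V] [Module K V]

/-- Derived series of a (Hom-)Jordan product: `D 0 = ⊤`, `D (k+1) = span μ(D k, D k)`.
For `k ≥ 1` this is the derived series `V⁽ᵏ⁾`. -/
def derivedSeries (μ : V →ₗ[K] V →ₗ[K] V) : ℕ → Submodule K V
  | 0 => ⊤
  | k + 1 => Submodule.span K {z | ∃ x ∈ derivedSeries μ k, ∃ y ∈ derivedSeries μ k, z = μ x y}

/-- `Ṽ⁽ᵏ⁾ = αᵏ(V⁽ᵏ⁾)` for `k ≥ 1`, and `(V,μ,α)` is solvable iff its induced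
Jordan algebra `(V,μ')` is solvable. -/
theorem stmt6 {F : Type*} [Field F] {V : Type*} [AddCommGroup V] [Module F V]
    (μ : V →ₗ[F] V →ₗ[F] V) (α : V →ₗ[F] V)
    (hHJ : IsHomJordan μ α) (hmul : IsMultiplicative μ α)
    (hbij : Function.Bijective α)
    (μ' : V →ₗ[F] V →ₗ[F] V) (hμ' : ∀ x y, α (μ' x y) = μ x y) :
    (∀ k : ℕ, 1 ≤ k →
        derivedSeries μ k = Submodule.map ((α ^ k : Module.End F V) : V →ₗ[F] V)
          (derivedSeries μ' k)) ∧
    ((∃ m : ℕ, 1 ≤ m ∧ derivedSeries μ m = ⊥) ↔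
      (∃ m : ℕ, 1 ≤ m ∧ derivedSeries μ' m = ⊥)) := by
  have hpowmul : ∀ (k : ℕ) (x y : V),
      ((α ^ k : Module.End F V) : V →ₗ[F] V) (μ x y)
        = μ (((α ^ k : Module.End F V) : V →ₗ[F] V) x)
            (((α ^ k : Module.End F V) : V →ₗ[F] V) y) := by
    intro k
    induction k with
    | zero => intro x y; simp
    | succ n ih =>
      intro x y
      have hs : ∀ w : V, ((α ^ (n+1) : Module.End F V) : V →ₗ[F] V) w
          = ((α ^ n : Module.End F V) : V →ₗ[F] V) (α w) := by
        intro w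
        rw [pow_succ]
        rfl
      rw [hs, hs, hs, hmul, ih]
  have hpowinj : ∀ k : ℕ,
      Function.Injective (((α ^ k : Module.End F V) : V →ₗ[F] V)) := by
    intro k
    induction k with
    | zero => intro a b h; simpa using h
    | succ n ih =>
      intro a b h
      have hs : ∀ w : V, ((α ^ (n+1) : Module.End F V) : V →ₗ[F] V) w
          = ((α ^ n : Module.End F V) : V →ₗ[F] V) (α w) := by
        intro w; rw [pow_succ]; rfl
      rw [hs, hs] at h
      exact hbij.1 (ih h)
  have main : ∀ k : ℕ, derivedSeries μ k
      = Submodule.map ((α ^ k : Module.End F V) : V →ₗ[F] V) (derivedSeries μ' k) := by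
    intro k
    induction k with
    | zero =>
      show (⊤ : Submodule F V) = Submodule.map _ ⊤
      rw [Submodule.map_top, eq_comm, LinearMap.range_eq_top]
      intro x; exact ⟨x, by simp⟩
    | succ n ih =>
      have hs : ∀ w : V, ((α ^ (n+1) : Module.End F V) : V →ₗ[F] V) w
          = ((α ^ n : Module.End F V) : V →ₗ[F] V) (α w) := by
        intro w; rw [pow_succ]; rfl
      show Submodule.span F _ = Submodule.map _ (Submodule.span F _)
      rw [Submodule.map_span]
      congr 1
      ext z
      constructor
      · rintro ⟨x, hx, y, hy, rfl⟩
        rw [ih] at hx hy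
        obtain ⟨x', hx', rfl⟩ := hx
        obtain ⟨y', hy', rfl⟩ := hy
        refine ⟨μ' x' y', ⟨x', hx', y', hy', rfl⟩, ?_⟩
        rw [hs, hμ', hpowmul]
      · rintro ⟨w, ⟨x', hx', y', hy', rfl⟩, rfl⟩
        refine ⟨((α ^ n : Module.End F V) : V →ₗ[F] V) x',
          ih ▸ Submodule.mem_map_of_mem hx',
          ((α ^ n : Module.End F V) : V →ₗ[F] V) y',
          ih ▸ Submodule.mem_map_of_mem hy', ?_⟩
        rw [hs, hμ', hpowmul]
  refine ⟨fun k _ => main k, ?_⟩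
  constructor
  · rintro ⟨m, hm, h⟩
    refine ⟨m, hm, ?_⟩
    rw [main m] at h
    ext x
    simp only [Submodule.mem_bot]
    constructor
    · intro hx
      have : ((α ^ m : Module.End F V) : V →ₗ[F] V) x ∈ (⊥ : Submodule F V) := by
        rw [← h]; exact Submodule.mem_map_of_mem hx
      rw [Submodule.mem_bot] at this
      exact hpowinj m (by simpa using this)
    · rintro rfl; exact Submodule.zero_mem _
  · rintro ⟨m, hm, h⟩
    exact ⟨m, hm, by rw [main m, h, Submodule.map_bot]⟩

end HomJordanPaper
end

section
/- Let (V, μ, α) be a multiplicative Hom-Jordan algebra with α² = α and μ(Im(α), V) ⊆ Im(α). Then V = Ker(α) ⊕ Im(α) as a direct sum of Hom-ideals, the restriction of α to Im(α) is invertible, and (Im(α), μ, α|_{Im(α)}) is isomorphic as a Hom-Jordan algebra to (V/Ker(α), μ̄, ᾱ). Consequently V ≅ (V/Ker(α)) ⊕ Ker(α) as Hom-Jordan algebras. -/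
namespace HomJordanPaper

variable {K : Type*} [Field K] {V : Type*} [AddCommGroup V] [Module K V]

/-- if `α² = α` and `μ(Im α, V) ⊆ Im α`, then `V = Ker α ⊕ Im α` as
Hom-ideals, `α` restricts to a bijection of `Im α`, and `Im α ≅ V ⧸ Ker α` as Hom-Jordan
algebras; hence `V ≅ (V ⧸ Ker α) ⊕ Ker α`. -/
theorem stmt12 {F : Type*} [Field F] {V : Type*} [AddCommGroup V] [Module F V]
    (μ : V →ₗ[F] V →ₗ[F] V) (α : V →ₗ[F] V)
    (hHJ : IsHomJordan μ α) (hmul : IsMultiplicative μ α)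
    (hidem : ∀ x, α (α x) = α x)
    (him : ∀ x ∈ LinearMap.range α, ∀ y : V, μ x y ∈ LinearMap.range α) :
    IsHomIdeal μ α (LinearMap.ker α) ∧ IsHomIdeal μ α (LinearMap.range α) ∧
    IsCompl (LinearMap.ker α) (LinearMap.range α) ∧
    (Submodule.map α (LinearMap.range α) = LinearMap.range α ∧
      ∀ x ∈ LinearMap.range α, ∀ y ∈ LinearMap.range α, α x = α y → x = y) ∧
    ∃ (μb : (V ⧸ LinearMap.ker α) →ₗ[F] (V ⧸ LinearMap.ker α) →ₗ[F] (V ⧸ LinearMap.ker α))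
      (αb : (V ⧸ LinearMap.ker α) →ₗ[F] (V ⧸ LinearMap.ker α)),
      (∀ x y : V, μb (Submodule.Quotient.mk x) (Submodule.Quotient.mk y)
          = Submodule.Quotient.mk (μ x y)) ∧
      (∀ x : V, αb (Submodule.Quotient.mk x) = Submodule.Quotient.mk (α x)) ∧
      IsHomJordan μb αb ∧ IsMultiplicative μb αb ∧
      ∃ e : (V ⧸ LinearMap.ker α) ≃ₗ[F] LinearMap.range α,
        (∀ x : V, (e (Submodule.Quotient.mk x) : V) = α x) ∧
        (∀ a b : V ⧸ LinearMap.ker α, (e (μb a b) : V) = μ (e a : V) (e b : V)) ∧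
        (∀ a : V ⧸ LinearMap.ker α, (e (αb a) : V) = α (e a : V)) := by
  have hcomm := hHJ.1
  have hkerμ : ∀ x, α x = 0 → ∀ y : V, μ x y ∈ LinearMap.ker α := by
    intro x hx y
    simp [LinearMap.mem_ker, hmul x y, hx]
  constructor
  · exact ⟨fun x hx => by simp [LinearMap.mem_ker] at hx ⊢; rw [hidem, hx],
      fun x hx y => hkerμ x hx y⟩
  constructor
  · exact ⟨fun x _ => ⟨x, rfl⟩, him⟩
  constructor
  · constructor
    · rw [disjoint_iff_inf_le]
      rintro x ⟨hx1, y, rfl⟩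
      have : α (α y) = 0 := hx1
      rw [hidem] at this
      simp [this]
    · rw [codisjoint_iff_le_sup]
      intro x _
      rw [show x = (x - α x) + α x by abel]
      exact Submodule.add_mem_sup (by simp [LinearMap.mem_ker, hidem]) ⟨x, rfl⟩
  constructor
  · constructor
    · apply le_antisymm
      · rintro _ ⟨y, -, rfl⟩; exact ⟨y, rfl⟩
      · rintro _ ⟨y, rfl⟩
        exact ⟨α y, ⟨y, rfl⟩, hidem y⟩
    · rintro _ ⟨a, rfl⟩ _ ⟨b, rfl⟩ h
      rw [hidem, hidem] at h; exact h
  -- quotient structures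
  set Kr := LinearMap.ker α with hKr
  have hle : ∀ x ∈ Kr, ∀ y : V, μ x y ∈ Kr := fun x hx y => hkerμ x hx y
  have hμ1 : Kr ≤ LinearMap.ker (μ.compr₂ Kr.mkQ) := by
    intro x hx
    simp only [LinearMap.mem_ker]
    ext y
    simp only [LinearMap.compr₂_apply, Submodule.mkQ_apply, LinearMap.zero_apply]
    rw [Submodule.Quotient.mk_eq_zero]
    exact hle x hx y
  set μ2 : (V ⧸ Kr) →ₗ[F] V →ₗ[F] (V ⧸ Kr) := Kr.liftQ (μ.compr₂ Kr.mkQ) hμ1 with hμ2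
  have hμ3 : Kr ≤ LinearMap.ker μ2.flip := by
    intro y hy
    simp only [LinearMap.mem_ker]
    ext x
    show μ2 (Submodule.Quotient.mk x) y = 0
    rw [hμ2]
    show Submodule.Quotient.mk (μ x y) = (0 : V ⧸ Kr)
    rw [Submodule.Quotient.mk_eq_zero, hcomm]
    exact hle y hy x
  set μb : (V ⧸ Kr) →ₗ[F] (V ⧸ Kr) →ₗ[F] (V ⧸ Kr) := (Kr.liftQ μ2.flip hμ3).flip with hμbdef
  have hμb : ∀ x y : V, μb (Submodule.Quotient.mk x) (Submodule.Quotient.mk y)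
      = Submodule.Quotient.mk (μ x y) := fun x y => rfl
  have hαker : Kr ≤ Kr.comap α := by
    intro x hx
    have : α x = 0 := hx
    simp [Submodule.mem_comap, hKr, LinearMap.mem_ker, this]
  set αb : (V ⧸ Kr) →ₗ[F] (V ⧸ Kr) := Kr.mapQ Kr α hαker with hαbdef
  have hαb : ∀ x : V, αb (Submodule.Quotient.mk x) = Submodule.Quotient.mk (α x) :=
    fun x => rfl
  have hsurj := Submodule.Quotient.mk_surjective Kr
  refine ⟨μb, αb, hμb, hαb, ?_, ?_, ?_⟩
  · constructor
    · intro a b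
      obtain ⟨x, rfl⟩ := hsurj a; obtain ⟨y, rfl⟩ := hsurj b
      rw [hμb, hμb, hcomm]
    · intro a b
      obtain ⟨x, rfl⟩ := hsurj a; obtain ⟨y, rfl⟩ := hsurj b
      simp only [hμb, hαb]
      rw [hHJ.2 x y]
  · intro a b
    obtain ⟨x, rfl⟩ := hsurj a; obtain ⟨y, rfl⟩ := hsurj b
    simp only [hμb, hαb]
    rw [hmul]
  · refine ⟨α.quotKerEquivRange, ?_, ?_, ?_⟩
    · intro x; exact (α.quotKerEquivRange_apply_mk x)
    · intro a b
      obtain ⟨x, rfl⟩ := hsurj a; obtain ⟨y, rfl⟩ := hsurj b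
      rw [hμb]
      have h1 := (α.quotKerEquivRange_apply_mk (μ x y))
      have h2 := (α.quotKerEquivRange_apply_mk x)
      have h3 := (α.quotKerEquivRange_apply_mk y)
      rw [h1, h2, h3, hmul]
    · intro a
      obtain ⟨x, rfl⟩ := hsurj a
      rw [hαb]
      have h1 := (α.quotKerEquivRange_apply_mk (α x))
      have h2 := (α.quotKerEquivRange_apply_mk x)
      rw [h1, h2, hidem]


end HomJordanPaper
end

section
/- For every positive integer n there exists an n-dimensional simple Hom-Jordan algebra (over ℝ when n = 1, over ℂ when n ≥ 2). -/
namespace HomJordanPaper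

variable {K : Type*} [Field K] {V : Type*} [AddCommGroup V] [Module K V]

open Finset in
noncomputable def Bf (m : ℕ) : (Fin m → ℂ) →ₗ[ℂ] (Fin m → ℂ) →ₗ[ℂ] ℂ :=
  LinearMap.mk₂ ℂ (fun u v => ∑ i, u i * v i)
    (by intros; simp [add_mul, Finset.sum_add_distrib])
    (by intros; simp [Finset.mul_sum]; exact Finset.sum_congr rfl (fun i _ => by ring))
    (by intros; simp [mul_add, Finset.sum_add_distrib])
    (by intros; simp [Finset.mul_sum]; exact Finset.sum_congr rfl (fun i _ => by ring))

lemma Bf_comm {m : ℕ} (u v : Fin m → ℂ) : Bf m u v = Bf m v u := by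
  simp only [Bf, LinearMap.mk₂_apply]
  exact Finset.sum_congr rfl (fun i _ => mul_comm _ _)

noncomputable def sp (m : ℕ) :
    (ℂ × (Fin m → ℂ)) →ₗ[ℂ] (ℂ × (Fin m → ℂ)) →ₗ[ℂ] (ℂ × (Fin m → ℂ)) :=
  LinearMap.mk₂ ℂ (fun x y => (x.1 * y.1 + Bf m x.2 y.2, x.1 • y.2 + y.1 • x.2))
    (by intros x x' y; simp [Prod.ext_iff, add_smul]; constructor; · ring
        · module)
    (by intros c x y; simp [Prod.ext_iff, smul_smul]; constructor; · ring
        · module)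
    (by intros x y y'; simp [Prod.ext_iff, add_smul]; constructor; · ring
        · module)
    (by intros c x y; simp [Prod.ext_iff, smul_smul]; constructor; · ring
        · module)

lemma sp_comm {m : ℕ} (x y : ℂ × (Fin m → ℂ)) : sp m x y = sp m y x := by
  simp only [sp, LinearMap.mk₂_apply, Prod.ext_iff]
  exact ⟨by rw [mul_comm, Bf_comm], by rw [add_comm]⟩

lemma sp_jordan {m : ℕ} (x y : ℂ × (Fin m → ℂ)) :
    sp m (sp m (sp m x x) y) x = sp m (sp m x x) (sp m y x) := by
  obtain ⟨a, u⟩ := x; obtain ⟨b, v⟩ := y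
  simp only [sp, LinearMap.mk₂_apply, Prod.ext_iff, map_add, map_smul, smul_eq_mul,
    LinearMap.add_apply, LinearMap.smul_apply]
  rw [Bf_comm v u]
  constructor
  · ring
  · funext i
    simp only [Pi.add_apply, Pi.smul_apply, smul_eq_mul]
    ring

noncomputable def af (m : ℕ) : (ℂ × (Fin m → ℂ)) →ₗ[ℂ] (ℂ × (Fin m → ℂ)) :=
  LinearMap.prodMap LinearMap.id (-LinearMap.id)

lemma af_hom {m : ℕ} (x y : ℂ × (Fin m → ℂ)) : af m (sp m x y) = sp m (af m x) (af m y) := by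
  simp only [af, sp, LinearMap.mk₂_apply, LinearMap.prodMap_apply, LinearMap.id_apply,
    LinearMap.neg_apply, Prod.ext_iff, map_neg]
  constructor
  · simp
  · simp; module

noncomputable def mu (m : ℕ) :
    (ℂ × (Fin m → ℂ)) →ₗ[ℂ] (ℂ × (Fin m → ℂ)) →ₗ[ℂ] (ℂ × (Fin m → ℂ)) :=
  (sp m).compr₂ (af m)

lemma mu_apply {m : ℕ} (x y : ℂ × (Fin m → ℂ)) : mu m x y = af m (sp m x y) := rfl

lemma sp_jid {m : ℕ} (A B : ℂ × (Fin m → ℂ)) :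
    sp m A (sp m B (sp m A A)) = sp m (sp m A B) (sp m A A) := by
  rw [sp_comm A (sp m B (sp m A A)), sp_comm B (sp m A A), sp_jordan A B,
    sp_comm (sp m A B) (sp m A A), sp_comm A B]

lemma mu_comm {m : ℕ} (x y : ℂ × (Fin m → ℂ)) : mu m x y = mu m y x := by
  rw [mu_apply, mu_apply, sp_comm]

lemma mu_hj {m : ℕ} (x y : ℂ × (Fin m → ℂ)) :
    mu m (af m (af m x)) (mu m y (mu m x x)) = mu m (mu m (af m x) y) (af m (mu m x x)) := by
  simp only [mu_apply, af_hom]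
  exact sp_jid (af m (af m (af m x))) (af m (af m y))

lemma mu_one_zero {m : ℕ} (y : ℂ × (Fin m → ℂ)) : mu m (1, 0) y = (y.1, -y.2) := by
  simp [mu_apply, sp, af, Prod.ext_iff]

lemma finrank_V (m : ℕ) : Module.finrank ℂ (ℂ × (Fin m → ℂ)) = 1 + m := by
  simp [Module.finrank_prod]


lemma Bf_single {m : ℕ} (u : Fin m → ℂ) (i : Fin m) : Bf m u (Pi.single i 1) = u i := by
  simp [Bf, Pi.single_apply, mul_ite, Finset.sum_ite_eq']

lemma mu_vec {m : ℕ} (u v : Fin m → ℂ) : mu m (0, u) (0, v) = (Bf m u v, 0) := by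
  simp [mu_apply, sp, af, Prod.ext_iff]

lemma af_apply {m : ℕ} (x : ℂ × (Fin m → ℂ)) : af m x = (x.1, -x.2) := rfl

lemma top_of_unit {m : ℕ} (I : Submodule ℂ (ℂ × (Fin m → ℂ)))
    (hμ : ∀ x ∈ I, ∀ y, mu m x y ∈ I) (c : ℂ) (hc : c ≠ 0)
    (hcI : ((c, 0) : ℂ × (Fin m → ℂ)) ∈ I) : I = ⊤ := by
  have h1 : ((1, 0) : ℂ × (Fin m → ℂ)) ∈ I := by
    have := I.smul_mem c⁻¹ hcI
    simpa [Prod.smul_mk, smul_eq_mul, inv_mul_cancel₀ hc] using this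
  rw [Submodule.eq_top_iff']
  intro z
  have := hμ _ h1 (z.1, -z.2)
  simpa [mu_one_zero] using this

lemma mu_simple (m : ℕ) :
    IsSimpleHJ (mu m) (af m) := by
  refine ⟨?_, ?_, ?_⟩
  · intro h
    have := LinearMap.congr_fun h (1, 0)
    simp [af_apply, Prod.ext_iff] at this
  · rintro I ⟨hα, hμ⟩
    by_cases hI : I = ⊥
    · exact Or.inl hI
    · right
      obtain ⟨x, hxI, hx0⟩ := Submodule.exists_mem_ne_zero_of_ne_bot hI
      obtain ⟨a, u⟩ := x
      by_cases ha : a = 0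
      · subst ha
        have hu : u ≠ 0 := by
          intro h; apply hx0; simp [h]
        obtain ⟨i, hi⟩ := Function.ne_iff.mp hu
        have : ((u i, 0) : ℂ × (Fin m → ℂ)) ∈ I := by
          have := hμ _ hxI (0, Pi.single i 1)
          rwa [mu_vec, Bf_single] at this
        exact top_of_unit I hμ _ (by simpa using hi) this
      · have h2 : ((2 * a, 0) : ℂ × (Fin m → ℂ)) ∈ I := by
          have := I.add_mem hxI (hα _ hxI)
          simpa [af_apply, Prod.ext_iff, two_mul] using this
        exact top_of_unit I hμ _ (by simpa using ha) h2
  · rw [productSpan, Submodule.eq_top_iff']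
    intro z
    exact Submodule.subset_span ⟨(1, 0), (z.1, -z.2), by simp [mu_one_zero]⟩

/-- for every `n ≥ 1` there exists an `n`-dimensional simple Hom-Jordan
algebra (over ℝ when `n = 1`, over ℂ when `n ≥ 2`). -/
theorem stmt15 (n : ℕ) (hn : 0 < n) :
    (n = 1 → ∃ (V : Type) (_ : AddCommGroup V) (_ : Module ℝ V)
      (μ : V →ₗ[ℝ] V →ₗ[ℝ] V) (α : V →ₗ[ℝ] V),
        Module.finrank ℝ V = n ∧ IsHomJordan μ α ∧ IsSimpleHJ μ α) ∧
    (2 ≤ n → ∃ (V : Type) (_ : AddCommGroup V) (_ : Module ℂ V)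
      (μ : V →ₗ[ℂ] V →ₗ[ℂ] V) (α : V →ₗ[ℂ] V),
        Module.finrank ℂ V = n ∧ IsHomJordan μ α ∧ IsSimpleHJ μ α) := by
  constructor
  · intro hn1
    refine ⟨ℝ, inferInstance, inferInstance, LinearMap.mul ℝ ℝ, LinearMap.id, ?_, ⟨?_, ?_⟩, ?_, ?_, ?_⟩
    · simpa [Module.finrank_self] using hn1.symm
    · intro x y; simp [LinearMap.mul_apply', mul_comm]
    · intro x y; simp [LinearMap.mul_apply']; ring
    · intro h
      have := LinearMap.congr_fun h 1
      simp at this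
    · rintro I ⟨h1, h2⟩
      by_cases hI : I = ⊥
      · exact Or.inl hI
      · right
        obtain ⟨x, hxI, hx0⟩ := Submodule.exists_mem_ne_zero_of_ne_bot hI
        rw [Submodule.eq_top_iff']
        intro z
        have := h2 x hxI (x⁻¹ * z)
        simpa [LinearMap.mul_apply', mul_inv_cancel_left₀ hx0] using this
    · rw [productSpan, Submodule.eq_top_iff']
      intro z
      exact Submodule.subset_span ⟨z, 1, by simp [LinearMap.mul_apply']⟩
  · intro hn2
    refine ⟨ℂ × (Fin (n - 1) → ℂ), inferInstance, inferInstance, mu (n - 1), af (n - 1),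
      ?_, ⟨mu_comm, mu_hj⟩, mu_simple (n - 1)⟩
    rw [finrank_V]
    omega


end HomJordanPaper
end

section
/- Let (V, μ, α) be a Jordan-type Hom-Jordan algebra with induced Jordan algebra (V, μ'), and let (W, α_W) be a V-bimodule with structure maps satisfying α_W(w·a) = α_W(w)·α(a) for all a ∈ V, w ∈ W, where α_W is invertible. Then W is a Jordan module over (V, μ') under the compositions w ·' a = α_W⁻¹(w·a) and a ·' w = α_W⁻¹(a·w). -/
namespace HomJordanPaper

variable {K : Type*} [Field K] {V : Type*} [AddCommGroup V] [Module K V]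

variable {W : Type*} [AddCommGroup W] [Module K W]

/-- `V`-bimodule over a Hom-Jordan algebra `(V, μ, α)`: left structure map `l`, right
structure map `r`, twist `αW`, satisfying the three bimodule identities. -/
def IsHomBimodule (μ : V →ₗ[K] V →ₗ[K] V) (α : V →ₗ[K] V)
    (l : V →ₗ[K] W →ₗ[K] W) (r : W →ₗ[K] V →ₗ[K] W) (αW : W → W) : Prop :=
  (∀ (a : V) (w : W), l a w = r w a) ∧
  (∀ (a b c : V) (w : W),
    r (αW (r w a)) (α (μ b c)) + r (αW (r w b)) (α (μ c a)) + r (αW (r w c)) (α (μ a b)) =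
      r (r (αW w) (μ b c)) (α (α a)) + r (r (αW w) (μ c a)) (α (α b)) +
        r (r (αW w) (μ a b)) (α (α c))) ∧
  (∀ (a b c : V) (w : W),
    r (αW (r w a)) (α (μ b c)) + r (αW (r w b)) (α (μ c a)) + r (αW (r w c)) (α (μ a b)) =
      r (r (r w a) (α b)) (α (α c)) + r (r (r w c) (α b)) (α (α a)) +
        l (μ (μ a c) (α b)) (αW (αW w)))

/-- Jordan module over a Jordan algebra `(V, μ')`, with (symmetric) composition `mr`. -/
def IsJordanModule (μ' : V →ₗ[K] V →ₗ[K] V) (mr : W →ₗ[K] V →ₗ[K] W) : Prop :=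
  (∀ (a b c : V) (x : W),
    mr (mr x a) (μ' b c) + mr (mr x b) (μ' c a) + mr (mr x c) (μ' a b) =
      mr (mr x (μ' b c)) a + mr (mr x (μ' c a)) b + mr (mr x (μ' a b)) c) ∧
  (∀ (a b c : V) (x : W),
    mr (mr (mr x a) b) c + mr (mr (mr x c) b) a + mr x (μ' (μ' a c) b) =
      mr (mr x a) (μ' b c) + mr (mr x b) (μ' c a) + mr (mr x c) (μ' a b))

/-- a bimodule over a Jordan-type Hom-Jordan algebra, with invertible
compatible twist `αW`, untwists to a Jordan module over the induced Jordan algebra. -/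
theorem stmt16 {F : Type*} [Field F] {V : Type*} [AddCommGroup V] [Module F V]
    {W : Type*} [AddCommGroup W] [Module F W]
    (μ μ' : V →ₗ[F] V →ₗ[F] V) (α : V →ₗ[F] V)
    (hJ : IsJordan μ')
    (hJT : ∀ x y, μ x y = α (μ' x y) ∧ μ x y = μ' (α x) (α y))
    (l : V →ₗ[F] W →ₗ[F] W) (r : W →ₗ[F] V →ₗ[F] W) (αW : W ≃ₗ[F] W)
    (hbm : IsHomBimodule μ α l r (fun w => αW w))
    (hcompat : ∀ (w : W) (a : V), αW (r w a) = r (αW w) (α a))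
    (mr : W →ₗ[F] V →ₗ[F] W) (hmr : ∀ (w : W) (a : V), mr w a = αW.symm (r w a))
    (ml : V →ₗ[F] W →ₗ[F] W) (hml : ∀ (a : V) (w : W), ml a w = αW.symm (l a w)) :
    (∀ (a : V) (w : W), ml a w = mr w a) ∧ IsJordanModule μ' mr := by
  obtain ⟨hsym, hbm2, hbm3⟩ := hbm
  have e1 : ∀ (w : W) (a : V), r w a = αW (mr w a) := by
    intro w a; rw [hmr, LinearEquiv.apply_symm_apply]
  have cm : ∀ (w : W) (a : V), mr (αW w) (α a) = αW (mr w a) := by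
    intro w a
    rw [hmr, ← hcompat, LinearEquiv.symm_apply_apply, hmr, LinearEquiv.apply_symm_apply]
  have hμ1 : ∀ x y, μ x y = α (μ' x y) := fun x y => (hJT x y).1
  have hμkey : ∀ a b c : V, μ (μ a c) (α b) = α (α (μ' (μ' a c) b)) := by
    intro a b c
    rw [(hJT _ _).1, (hJT a c).1, ← (hJT (μ' a c) b).2, (hJT _ _).1]
  have hμ2 : ∀ x y, μ' (α x) (α y) = α (μ' x y) := by
    intro x y; rw [← (hJT x y).2, (hJT x y).1]
  refine ⟨fun a w => by rw [hml, hmr, hsym], ?_, ?_⟩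
  · intro a b c x
    have h2 := hbm2 a b c x
    simp only [hμ1, e1, ← map_add, hcompat, cm] at h2
    exact αW.injective (αW.injective (αW.injective h2))
  · intro a b c x
    have h3 := hbm3 a b c x
    simp only [hsym, hμkey, hμ1, hμ2, e1, ← map_add, hcompat, cm] at h3
    have h4 := αW.injective (αW.injective (αW.injective h3))
    abel_nf at h4 ⊢
    exact h4.symm


end HomJordanPaper
end

section
/- Let (V, μ, α) be a Jordan-type Hom-Jordan algebra with induced Jordan algebra (V, μ'), and let W be a Jordan module over (V, μ') with compositions w ·' a = a ·' w. Suppose α_W ∈ End(W) satisfies α_W(w ·' a) = α_W(w) ·' α(a) for all a ∈ V, w ∈ W. Then (W, α_W) is a V-bimodule of (V, μ, α) with structure maps a·w = α_W(a ·' w) and w·a = α_W(w ·' a). -/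
namespace HomJordanPaper

variable {K : Type*} [Field K] {V : Type*} [AddCommGroup V] [Module K V]

variable {W : Type*} [AddCommGroup W] [Module K W]

/-- a Jordan module over the induced Jordan algebra, with compatible
`αW ∈ End(W)`, twists to a bimodule over the Jordan-type Hom-Jordan algebra. -/
theorem stmt17 {F : Type*} [Field F] {V : Type*} [AddCommGroup V] [Module F V]
    {W : Type*} [AddCommGroup W] [Module F W]
    (μ μ' : V →ₗ[F] V →ₗ[F] V) (α : V →ₗ[F] V)
    (hJ : IsJordan μ')
    (hJT : ∀ x y, μ x y = α (μ' x y) ∧ μ x y = μ' (α x) (α y))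
    (mr : W →ₗ[F] V →ₗ[F] W) (hmod : IsJordanModule μ' mr)
    (αW : W →ₗ[F] W)
    (hcompat : ∀ (w : W) (a : V), αW (mr w a) = mr (αW w) (α a))
    (l : V →ₗ[F] W →ₗ[F] W) (hl : ∀ (a : V) (w : W), l a w = αW (mr w a))
    (r : W →ₗ[F] V →ₗ[F] W) (hr : ∀ (w : W) (a : V), r w a = αW (mr w a)) :
    IsHomBimodule μ α l r (fun w => αW w) := by
  have hmul : ∀ x y, α (μ' x y) = μ' (α x) (α y) := fun x y =>
    (hJT x y).1.symm.trans (hJT x y).2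
  have hμ : ∀ x y, μ x y = α (μ' x y) := fun x y => (hJT x y).1
  refine ⟨fun a w => by rw [hl, hr], fun a b c w => ?_, fun a b c w => ?_⟩
  · simp only [hr, hcompat, hμ, hmul]
    exact hmod.1 (α (α (α a))) (α (α (α b))) (α (α (α c))) (αW (αW (αW w)))
  · simp only [hr, hl, hcompat, hμ, hmul]
    exact ((hmod.2 (α (α (α a))) (α (α (α b))) (α (α (α c))) (αW (αW (αW w)))).symm)

end HomJordanPaper
end
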